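/- For every ρ ∈ (0,1), the map (α,β) ↦ F(α,β;ρ) is real-analytic on ℝ². -/

import Mathlib

/-- `x·u(x)` for interaction strength `α`: the quantity
`(α/2)x + log 2 + (1/2)x log x − (1/2)(x−2) log(x−2)`
(convention `0 log 0 = 0`, automatic since `Real.log 0 = 0`). The same formula
with `β` in place of `α` gives `y·v(y)`. -/
noncomputable def xu (α x : ℝ) : ℝ :=
  α / 2 * x + Real.log 2 + (1 / 2) * x * Real.log x - (1 / 2) * (x - 2) * Real.log (x - 2)

/-- The integrand of the variational formula for `F(α,β;ρ)`:
`[ρ x u(x) + (1−ρ) y v(y)] / [ρ x + (1−ρ) y]`. -/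
noncomputable def Fint (α β ρ x y : ℝ) : ℝ :=
  (ρ * xu α x + (1 - ρ) * xu β y) / (ρ * x + (1 - ρ) * y)

/-- `F(α,β;ρ) = sup_{x ≥ 2, y ≥ 2} [ρ x u(x) + (1−ρ) y v(y)] / [ρ x + (1−ρ) y]`. -/
noncomputable def Fsup (α β ρ : ℝ) : ℝ :=
  sSup {z : ℝ | ∃ x y : ℝ, 2 ≤ x ∧ 2 ≤ y ∧ z = Fint α β ρ x y}

/-!
For every slope parameter `a`, the concave function `x ↦ x u(x) = xu γ x` lies on `[2, ∞)` below
the line of slope `(γ + log (1 + exp a)) / 2` and intercept `log 4 - a`, touching it at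
`2 + 2 exp (-a)`; this is a two-term Gibbs inequality. So `F(α, β; ρ)` is the common slope of a
tangent line to `xu α` and one to `xu β` whose intercepts average to zero with weights `ρ, 1 - ρ`.
Eliminating the second parameter, the first one is `g (β - α)` for the inverse `g` of a strictly
increasing analytic bijection of `ℝ` with positive derivative, and `g` is analytic by the inverse
function theorem.
-/

open Real Filter Set

theorem exists_analyticOnNhd_rightInverse {f : ℝ → ℝ} (hf : AnalyticOnNhd ℝ f univ)
    (hderiv : ∀ x, 0 < deriv f x) (hsurj : Function.Surjective f) :
    ∃ g : ℝ → ℝ, AnalyticOnNhd ℝ g univ ∧ Function.RightInverse g f := by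
  let e := ((strictMono_of_deriv_pos hderiv).orderIsoOfSurjective f hsurj).toHomeomorph
  refine ⟨e.symm, ?_, e.apply_symm_apply⟩
  exact ContDiff.analyticOnNhd (e.contDiff_symm_deriv (fun x => (hderiv x).ne')
    (fun x => (hf x (mem_univ x)).differentiableAt.hasDerivAt) hf.contDiff)

theorem mul_log_sub_mul_log_le {p q : ℝ} (hp : 0 < p) (hq : 0 ≤ q) :
    q * log p - q * log q ≤ p - q := by
  rcases hq.eq_or_lt with rfl | hq
  · simpa using hp.le
  have h := log_le_sub_one_of_pos (div_pos hp hq)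
  rw [log_div hp.ne' hq.ne'] at h
  calc q * log p - q * log q = q * (log p - log q) := by ring
    _ ≤ q * (p / q - 1) := mul_le_mul_of_nonneg_left h hq.le
    _ = p - q := by field_simp

noncomputable def softplus (a : ℝ) : ℝ := log (1 + exp a)

theorem softplus_zero : softplus 0 = log 2 := by norm_num [softplus]

theorem le_softplus (a : ℝ) : a ≤ softplus a := by
  unfold softplus
  simpa using log_le_log (exp_pos a) (by linarith [exp_pos a] : exp a ≤ 1 + exp a)

theorem monotone_softplus : Monotone softplus := fun a b h =>
  log_le_log (by positivity) (by linarith [exp_le_exp.2 h])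

theorem hasDerivAt_softplus (a : ℝ) : HasDerivAt softplus (exp a / (1 + exp a)) a :=
  ((hasDerivAt_exp a).const_add 1).log (by positivity)

@[fun_prop]
theorem analyticAt_softplus (a : ℝ) : AnalyticAt ℝ softplus a :=
  (analyticAt_const.add analyticAt_rexp).log (by simp only [Pi.add_apply]; positivity)

theorem log_four : log 4 = 2 * log 2 := by
  rw [show (4 : ℝ) = 2 ^ 2 by norm_num, log_pow]; norm_num

/-- The parameter `a` is `log (exp (2 s) - 1)` for the slope excess `s` of the tangent line
over `γ / 2`; the line touches the graph of `xu γ` at `x = 2 + 2 * exp (-a)`. -/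
theorem xu_le_tangent (γ a : ℝ) {x : ℝ} (hx : 2 ≤ x) :
    xu γ x ≤ (γ + softplus a) / 2 * x + log 4 - a := by
  have hE : 0 < 1 + exp a := by positivity
  have hx0 : 0 < x := by linarith
  -- two instances of `q log (p / q) ≤ p - q` whose `p`'s and `q`'s both sum to `x`
  have h₁ := mul_log_sub_mul_log_le (p := x * exp a / (1 + exp a)) (q := 2) (by positivity)
    (by norm_num)
  have h₂ := mul_log_sub_mul_log_le (p := x / (1 + exp a)) (q := x - 2) (by positivity)
    (by linarith)
  rw [log_div (by positivity) hE.ne', log_mul hx0.ne' (exp_pos a).ne', log_exp] at h₁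
  rw [log_div hx0.ne' hE.ne'] at h₂
  have hsum : x * exp a / (1 + exp a) + x / (1 + exp a) = x := by field_simp; ring
  rw [xu, softplus, log_four]
  linarith

theorem xu_eq_tangent_at (γ a : ℝ) :
    xu γ (2 + 2 * exp (-a)) = (γ + softplus a) / 2 * (2 + 2 * exp (-a)) + log 4 - a := by
  have hx : 2 + 2 * exp (-a) = 2 * (1 + exp a) * exp (-a) := by
    rw [exp_neg]; field_simp; ring
  have h₁ : log (2 + 2 * exp (-a)) = log 2 + softplus a - a := by
    rw [hx, log_mul (by positivity) (exp_pos _).ne', log_mul (by norm_num) (by positivity),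
      log_exp, softplus]; ring
  have h₂ : log (2 + 2 * exp (-a) - 2) = log 2 - a := by
    rw [add_sub_cancel_left, log_mul (by norm_num) (exp_pos _).ne', log_exp]; ring
  rw [xu, h₁, h₂, log_four]
  ring

/-- With `b = (log 4 - ρ a) / (1 - ρ)` the tangent intercepts `log 4 - a` and `log 4 - b` average
to zero with weights `ρ, 1 - ρ`; the two tangent slopes agree iff `slopeGap ρ a = β - α`. -/
noncomputable def slopeGap (ρ a : ℝ) : ℝ := softplus a - softplus ((log 4 - ρ * a) / (1 - ρ))

theorem analyticAt_slopeGap (ρ a : ℝ) : AnalyticAt ℝ (slopeGap ρ) a := by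
  unfold slopeGap; fun_prop

theorem deriv_slopeGap_pos {ρ : ℝ} (hρ0 : 0 < ρ) (hρ1 : ρ < 1) (a : ℝ) :
    0 < deriv (slopeGap ρ) a := by
  have hb : HasDerivAt (fun a => (log 4 - ρ * a) / (1 - ρ)) (-ρ / (1 - ρ)) a := by
    simpa using (((hasDerivAt_id a).const_mul ρ).const_sub (log 4)).div_const (1 - ρ)
  have hgap : HasDerivAt (slopeGap ρ) _ a :=
    (hasDerivAt_softplus a).sub ((hasDerivAt_softplus _).comp a hb)
  have hc : 0 < ρ / (1 - ρ) := div_pos hρ0 (by linarith)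
  rw [hgap.deriv, neg_div, mul_neg, sub_neg_eq_add]
  positivity

theorem surjective_slopeGap {ρ : ℝ} (hρ0 : 0 < ρ) (hρ1 : ρ < 1) :
    Function.Surjective (slopeGap ρ) := by
  have hc : 0 < ρ / (1 - ρ) := div_pos hρ0 (by linarith)
  have hb (a : ℝ) : (log 4 - ρ * a) / (1 - ρ) = log 4 / (1 - ρ) - ρ / (1 - ρ) * a := by ring
  refine (continuous_iff_continuousAt.2 fun a => (analyticAt_slopeGap ρ a).continuousAt).surjective
    ?_ ?_
  · refine tendsto_atTop_mono' _ ?_ (tendsto_atTop_add_const_right _ (-softplus (log 4 / (1 - ρ)))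
      tendsto_id)
    filter_upwards [eventually_ge_atTop 0] with a ha
    have h₁ := le_softplus a
    have h₂ : softplus ((log 4 - ρ * a) / (1 - ρ)) ≤ softplus (log 4 / (1 - ρ)) :=
      monotone_softplus (by rw [hb]; nlinarith)
    simp only [slopeGap, id]
    linarith
  · refine tendsto_atBot_mono' _ ?_ (tendsto_atBot_add_const_left _ (log 2 - log 4 / (1 - ρ))
      (tendsto_id.const_mul_atBot hc))
    filter_upwards [eventually_le_atBot 0] with a ha
    have h₁ : softplus a ≤ log 2 := softplus_zero ▸ monotone_softplus ha
    have h₂ := le_softplus ((log 4 - ρ * a) / (1 - ρ))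
    rw [hb] at h₂
    simp only [slopeGap, id, hb]
    linarith

theorem isGreatest_Fint {ρ α β a b : ℝ} (hρ0 : 0 < ρ) (hρ1 : ρ < 1)
    (hab : ρ * a + (1 - ρ) * b = log 4) (hslope : α + softplus a = β + softplus b) :
    IsGreatest {z | ∃ x y : ℝ, 2 ≤ x ∧ 2 ≤ y ∧ z = Fint α β ρ x y} ((α + softplus a) / 2) := by
  constructor
  · refine ⟨2 + 2 * exp (-a), 2 + 2 * exp (-b), le_add_of_nonneg_right (by positivity),
      le_add_of_nonneg_right (by positivity), ?_⟩
    have hS : 0 < ρ * (2 + 2 * exp (-a)) + (1 - ρ) * (2 + 2 * exp (-b)) := by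
      have := exp_pos (-a); have := exp_pos (-b); nlinarith
    rw [Fint, xu_eq_tangent_at, xu_eq_tangent_at, ← hslope, eq_div_iff hS.ne']
    linear_combination hab
  · rintro z ⟨x, y, hx, hy, rfl⟩
    have hS : 0 < ρ * x + (1 - ρ) * y := by nlinarith
    have h₁ := mul_le_mul_of_nonneg_left (xu_le_tangent α a hx) hρ0.le
    have h₂ := mul_le_mul_of_nonneg_left (xu_le_tangent β b hy) (sub_nonneg.2 hρ1.le)
    rw [← hslope] at h₂
    rw [Fint, div_le_iff₀ hS]
    linarith

theorem Fsup_eq {ρ α β a : ℝ} (hρ0 : 0 < ρ) (hρ1 : ρ < 1) (ha : slopeGap ρ a = β - α) :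
    Fsup α β ρ = (α + softplus a) / 2 :=
  (isGreatest_Fint hρ0 hρ1 (b := (log 4 - ρ * a) / (1 - ρ))
    (by field_simp [(by linarith : 1 - ρ ≠ 0)]; ring) (by unfold slopeGap at ha; linarith)).csSup_eq

/-- For every `ρ ∈ (0,1)`, `(α,β) ↦ F(α,β;ρ)` is real-analytic on `ℝ²`. -/
theorem stmt18 (ρ : ℝ) (hρ0 : 0 < ρ) (hρ1 : ρ < 1) :
    AnalyticOnNhd ℝ (fun q : ℝ × ℝ => Fsup q.1 q.2 ρ) Set.univ := by
  obtain ⟨g, hg, hgap⟩ := exists_analyticOnNhd_rightInverse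
    (fun a _ => analyticAt_slopeGap ρ a) (deriv_slopeGap_pos hρ0 hρ1) (surjective_slopeGap hρ0 hρ1)
  have hF : (fun q : ℝ × ℝ => Fsup q.1 q.2 ρ) = fun q => (q.1 + softplus (g (q.2 - q.1))) / 2 :=
    funext fun q => Fsup_eq hρ0 hρ1 (hgap _)
  rw [hF]
  intro q _
  have hgq := (hg _ (mem_univ _)).comp (analyticAt_snd.sub analyticAt_fst) (x := q)
  exact (analyticAt_fst.add ((analyticAt_softplus _).comp hgq)).div_const
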